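/- arXiv:1605.04017 — 6 statements merged into one kernel-verified Lean document; each statement's English description precedes it below -/
import Mathlib

section
/- Let f : ℝ → ℝ → ℝ be positive on [1,∞)×[1,∞), twice differentiable there, monotone non-decreasing (f(a,b) ≤ f(c,d) whenever 1 ≤ a ≤ c and 1 ≤ b ≤ d), and satisfy: (1) ∂f/∂x and ∂f/∂y at (t,t) converge as t → ∞ to constants C_x and C_y with C_x + C_y > 0, and f(t,t) = (C_x+C_y)·t for all t ≥ 1; (2) there exist A, B ≥ 0 with A + B < C_x + C_y and N such that for all n ≥ N and all a₁,a₂,a₃,a₄ ∈ [(2+C_x+C_y)ⁿ, 2(2+C_x+C_y)ⁿ], (f(a₁,a₂) − f(a₃,a₄))² ≤ A(a₁−a₃)² + B(a₂−a₄)²; (3) for each second-order partial derivative g of f, (2+C_x+C_y)^{2n} · sup{ g(s,t)² : (s,t) ∈ [(2+C_x+C_y)ⁿ, 2(2+C_x+C_y)ⁿ]² } / 2ⁿ → 0. If in addition f is concave or convex on [1,∞)×[1,∞), then the sequence E_n / (2+C_x+C_y)ⁿ converges. -/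
open MeasureTheory Filter

/-- The recursively defined sequence of measures: `μ₀ = (δ₁ + δ₂)/2` and `μ_{n+1}` is the
pushforward of `μ_n ⊗ μ_n ⊗ μ_n ⊗ μ_n` under `(a,b,c,d) ↦ a + b + f c d`. -/
noncomputable def mu (f : ℝ → ℝ → ℝ) : ℕ → Measure ℝ
  | 0 => (2 : ENNReal)⁻¹ • Measure.dirac 1 + (2 : ENNReal)⁻¹ • Measure.dirac 2
  | n + 1 =>
      Measure.map (fun p : ℝ × ℝ × ℝ × ℝ => p.1 + p.2.1 + f p.2.2.1 p.2.2.2)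
        ((mu f n).prod ((mu f n).prod ((mu f n).prod (mu f n))))

/-- The mean of `μ_n`. -/
noncomputable def En (f : ℝ → ℝ → ℝ) (n : ℕ) : ℝ := ∫ x, x ∂(mu f n)

/-- The variance of `μ_n`. -/
noncomputable def Vn (f : ℝ → ℝ → ℝ) (n : ℕ) : ℝ := ∫ x, (x - En f n) ^ 2 ∂(mu f n)

/-- First-order partial derivative of `f` in the first variable. -/
noncomputable def pdx (f : ℝ → ℝ → ℝ) (s t : ℝ) : ℝ := deriv (fun u => f u t) s

/-- First-order partial derivative of `f` in the second variable. -/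
noncomputable def pdy (f : ℝ → ℝ → ℝ) (s t : ℝ) : ℝ := deriv (fun v => f s v) t

/-- Second-order partial derivative `∂²f/∂x²`. -/
noncomputable def pdxx (f : ℝ → ℝ → ℝ) (s t : ℝ) : ℝ := deriv (fun u => pdx f u t) s

/-- Second-order partial derivative `∂²f/∂y²`. -/
noncomputable def pdyy (f : ℝ → ℝ → ℝ) (s t : ℝ) : ℝ := deriv (fun v => pdy f s v) t

/-- Second-order mixed partial derivative `∂²f/∂x∂y`. -/
noncomputable def pdxy (f : ℝ → ℝ → ℝ) (s t : ℝ) : ℝ := deriv (fun v => pdx f s v) t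

open Set Function

/-!
Write `C = C_x + C_y`. The means satisfy `E_{n+1} = 2 E_n + ∫ f d(μ_n ⊗ μ_n)`, and the barycentre
of `μ_n ⊗ μ_n` is the diagonal point `(E_n, E_n)`, where `f` equals `C E_n`. So Jensen's inequality
gives `E_{n+1} ≥ (2 + C) E_n` when `f` is convex and `E_{n+1} ≤ (2 + C) E_n` when `f` is concave,
and `E_n / (2 + C)ⁿ` is monotone. Monotonicity of `f` and its linearity on the diagonal keep `μ_n`
supported in `[(2 + C)ⁿ, 2 (2 + C)ⁿ]`, so this ratio stays in `[1, 2]` and converges.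
-/

theorem ae_mem_prod {α β : Type*} [MeasurableSpace α] [MeasurableSpace β] {μ : Measure α}
    {ν : Measure β} [SFinite ν] {s : Set α} {t : Set β} (hs : ∀ᵐ x ∂μ, x ∈ s)
    (ht : ∀ᵐ y ∂ν, y ∈ t) : ∀ᵐ p ∂μ.prod ν, p ∈ s ×ˢ t :=
  (Measure.quasiMeasurePreserving_fst.ae hs).and (Measure.quasiMeasurePreserving_snd.ae ht)

theorem integrable_id_of_ae_mem_Icc {μ : Measure ℝ} [IsFiniteMeasure μ] {a b : ℝ}
    (hμ : ∀ᵐ x ∂μ, x ∈ Icc a b) : Integrable id μ :=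
  .of_bound aestronglyMeasurable_id (max |a| |b|)
    (hμ.mono fun _ hx => abs_le_max_abs_abs hx.1 hx.2)

theorem integral_id_mem_Icc {μ : Measure ℝ} [IsProbabilityMeasure μ] {a b : ℝ}
    (hμ : ∀ᵐ x ∂μ, x ∈ Icc a b) : ∫ x, x ∂μ ∈ Icc a b :=
  (convex_Icc a b).integral_mem isClosed_Icc hμ (integrable_id_of_ae_mem_Icc hμ)

theorem integral_prod_id {μ ν : Measure ℝ} [IsProbabilityMeasure μ] [IsProbabilityMeasure ν]
    (hμ : Integrable id μ) (hν : Integrable id ν) :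
    ∫ q, q ∂μ.prod ν = (∫ x, x ∂μ, ∫ y, y ∂ν) := by
  change ∫ q, (id q.1, id q.2) ∂μ.prod ν = _
  rw [integral_pair (hμ.comp_fst ν) (hν.comp_snd μ), integral_fun_fst, integral_fun_snd]
  simp

theorem exists_tendsto_div_pow_of_mem_Icc {e : ℕ → ℝ} {L c d : ℝ} (hL : 0 < L)
    (he : ∀ n, e n ∈ Icc (c * L ^ n) (d * L ^ n))
    (hrec : (∀ n, L * e n ≤ e (n + 1)) ∨ ∀ n, e (n + 1) ≤ L * e n) :
    ∃ l, Tendsto (fun n => e n / L ^ n) atTop (nhds l) := by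
  have hbdd (n : ℕ) : e n / L ^ n ∈ Icc c d :=
    ⟨(le_div_iff₀ (pow_pos hL n)).2 (he n).1, (div_le_iff₀ (pow_pos hL n)).2 (he n).2⟩
  rcases hrec with hrec | hrec
  · refine ⟨_, tendsto_atTop_ciSup (monotone_nat_of_le_succ fun n => ?_)
      ⟨d, forall_mem_range.2 fun n => (hbdd n).2⟩⟩
    rw [div_le_div_iff₀ (pow_pos hL n) (pow_pos hL (n + 1)), pow_succ]
    nlinarith [hrec n, pow_pos hL n]
  · refine ⟨_, tendsto_atTop_ciInf (antitone_nat_of_succ_le fun n => ?_)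
      ⟨c, forall_mem_range.2 fun n => (hbdd n).1⟩⟩
    rw [div_le_div_iff₀ (pow_pos hL (n + 1)) (pow_pos hL n), pow_succ]
    nlinarith [hrec n, pow_pos hL n]

def stepMap (f : ℝ → ℝ → ℝ) (p : ℝ × ℝ × ℝ × ℝ) : ℝ := p.1 + p.2.1 + f p.2.2.1 p.2.2.2

theorem mu_succ (f : ℝ → ℝ → ℝ) (n : ℕ) :
    mu f (n + 1) = ((mu f n).prod ((mu f n).prod ((mu f n).prod (mu f n)))).map (stepMap f) :=
  rfl

section Quadrant

variable {f : ℝ → ℝ → ℝ} {C : ℝ}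

theorem mem_Icc_of_monotone_of_diag
    (hmono : ∀ a b c d : ℝ, 1 ≤ a → a ≤ c → 1 ≤ b → b ≤ d → f a b ≤ f c d)
    (hlin : ∀ t : ℝ, 1 ≤ t → f t t = C * t) {a b x y : ℝ} (ha : 1 ≤ a) (hx : x ∈ Icc a b)
    (hy : y ∈ Icc a b) : f x y ∈ Icc (C * a) (C * b) := by
  rw [← hlin a ha, ← hlin b (ha.trans (hx.1.trans hx.2))]
  exact ⟨hmono _ _ _ _ ha hx.1 ha hy.1, hmono _ _ _ _ (ha.trans hx.1) hx.2 (ha.trans hy.1) hy.2⟩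

variable {μ : Measure ℝ} [IsProbabilityMeasure μ] {a b : ℝ}

theorem ae_mem_Ici_prod (ha : 1 ≤ a) (hμ : ∀ᵐ x ∂μ, x ∈ Icc a b) :
    ∀ᵐ q ∂μ.prod μ, q ∈ Ici 1 ×ˢ Ici 1 :=
  (ae_mem_prod hμ hμ).mono fun _ hq => ⟨ha.trans hq.1.1, ha.trans hq.2.1⟩

theorem integrable_uncurry_prod (hf : ContinuousOn (uncurry f) (Ici 1 ×ˢ Ici 1)) (ha : 1 ≤ a)
    (hμ : ∀ᵐ x ∂μ, x ∈ Icc a b) : Integrable (uncurry f) (μ.prod μ) := by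
  have hsub : Icc a b ×ˢ Icc a b ⊆ Ici 1 ×ˢ Ici 1 :=
    prod_mono (fun x hx => ha.trans hx.1) (fun x hx => ha.trans hx.1)
  have hf' := hf.mono hsub
  have hmeas := hf'.aemeasurable (μ := μ.prod μ) (measurableSet_Icc.prod measurableSet_Icc)
  rw [Measure.restrict_eq_self_of_ae_mem (ae_mem_prod hμ hμ)] at hmeas
  obtain ⟨M, hM⟩ := (isCompact_Icc.prod isCompact_Icc).exists_bound_of_continuousOn hf'
  exact .of_bound hmeas.aestronglyMeasurable M ((ae_mem_prod hμ hμ).mono hM)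

theorem aemeasurable_stepMap (hf : ContinuousOn (uncurry f) (Ici 1 ×ˢ Ici 1)) (ha : 1 ≤ a)
    (hμ : ∀ᵐ x ∂μ, x ∈ Icc a b) : AEMeasurable (stepMap f) (μ.prod (μ.prod (μ.prod μ))) :=
  have hid := integrable_id_of_ae_mem_Icc hμ
  (((hid.comp_fst _).add ((hid.comp_fst _).comp_snd _)).add
    (((integrable_uncurry_prod hf ha hμ).comp_snd _).comp_snd _)).aemeasurable

theorem integral_map_stepMap (hf : ContinuousOn (uncurry f) (Ici 1 ×ˢ Ici 1)) (ha : 1 ≤ a)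
    (hμ : ∀ᵐ x ∂μ, x ∈ Icc a b) :
    ∫ x, x ∂(μ.prod (μ.prod (μ.prod μ))).map (stepMap f)
      = 2 * ∫ x, x ∂μ + ∫ q, uncurry f q ∂μ.prod μ := by
  have hid := integrable_id_of_ae_mem_Icc hμ
  have h1 : Integrable (fun p : ℝ × ℝ × ℝ × ℝ => p.1) (μ.prod (μ.prod (μ.prod μ))) :=
    hid.comp_fst _
  have h2 : Integrable (fun p : ℝ × ℝ × ℝ × ℝ => p.2.1) (μ.prod (μ.prod (μ.prod μ))) :=
    (hid.comp_fst _).comp_snd _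
  have h3 : Integrable (fun p : ℝ × ℝ × ℝ × ℝ => f p.2.2.1 p.2.2.2)
      (μ.prod (μ.prod (μ.prod μ))) :=
    ((integrable_uncurry_prod hf ha hμ).comp_snd _).comp_snd _
  rw [integral_map (f := fun x => x) (aemeasurable_stepMap hf ha hμ) aestronglyMeasurable_id]
  simp only [stepMap]
  rw [integral_add (by exact h1.add h2) h3, integral_add h1 h2,
    integral_fun_fst (f := fun x => x), integral_fun_snd (f := fun q : ℝ × ℝ × ℝ => q.1),
    integral_fun_fst (f := fun x => x),
    integral_fun_snd (f := fun q : ℝ × ℝ × ℝ => f q.2.1 q.2.2),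
    integral_fun_snd (f := fun q : ℝ × ℝ => f q.1 q.2)]
  simp [two_mul, uncurry_def]

theorem ae_mem_Icc_map_stepMap (hf : ContinuousOn (uncurry f) (Ici 1 ×ˢ Ici 1))
    (hmono : ∀ a b c d : ℝ, 1 ≤ a → a ≤ c → 1 ≤ b → b ≤ d → f a b ≤ f c d)
    (hlin : ∀ t : ℝ, 1 ≤ t → f t t = C * t) (ha : 1 ≤ a) (hμ : ∀ᵐ x ∂μ, x ∈ Icc a b) :
    ∀ᵐ y ∂(μ.prod (μ.prod (μ.prod μ))).map (stepMap f), y ∈ Icc ((2 + C) * a) ((2 + C) * b) := by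
  refine (ae_map_iff (aemeasurable_stepMap hf ha hμ) measurableSet_Icc).2 ?_
  filter_upwards [ae_mem_prod hμ (ae_mem_prod hμ (ae_mem_prod hμ hμ))] with p ⟨h1, h2, h3, h4⟩
  have hfp := mem_Icc_of_monotone_of_diag hmono hlin ha h3 h4
  constructor <;> simp only [stepMap] <;> linarith [h1.1, h1.2, h2.1, h2.2, hfp.1, hfp.2]

theorem two_add_mul_integral_le_of_convexOn (hconv : ConvexOn ℝ (Ici 1 ×ˢ Ici 1) (uncurry f))
    (hf : ContinuousOn (uncurry f) (Ici 1 ×ˢ Ici 1)) (hlin : ∀ t : ℝ, 1 ≤ t → f t t = C * t)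
    (ha : 1 ≤ a) (hμ : ∀ᵐ x ∂μ, x ∈ Icc a b) :
    (2 + C) * ∫ x, x ∂μ ≤ ∫ x, x ∂(μ.prod (μ.prod (μ.prod μ))).map (stepMap f) := by
  have hid := integrable_id_of_ae_mem_Icc hμ
  have hjensen := hconv.map_integral_le hf (isClosed_Ici.prod isClosed_Ici)
    (ae_mem_Ici_prod ha hμ) ((hid.comp_fst μ).prodMk (hid.comp_snd μ))
    (integrable_uncurry_prod hf ha hμ)
  rw [integral_prod_id hid hid, uncurry_apply_pair,
    hlin _ (ha.trans (integral_id_mem_Icc hμ).1)] at hjensen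
  rw [integral_map_stepMap hf ha hμ]
  linarith

theorem integral_le_two_add_mul_of_concaveOn (hconc : ConcaveOn ℝ (Ici 1 ×ˢ Ici 1) (uncurry f))
    (hf : ContinuousOn (uncurry f) (Ici 1 ×ˢ Ici 1)) (hlin : ∀ t : ℝ, 1 ≤ t → f t t = C * t)
    (ha : 1 ≤ a) (hμ : ∀ᵐ x ∂μ, x ∈ Icc a b) :
    ∫ x, x ∂(μ.prod (μ.prod (μ.prod μ))).map (stepMap f) ≤ (2 + C) * ∫ x, x ∂μ := by
  have hid := integrable_id_of_ae_mem_Icc hμ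
  have hjensen := hconc.le_map_integral hf (isClosed_Ici.prod isClosed_Ici)
    (ae_mem_Ici_prod ha hμ) ((hid.comp_fst μ).prodMk (hid.comp_snd μ))
    (integrable_uncurry_prod hf ha hμ)
  rw [integral_prod_id hid hid, uncurry_apply_pair,
    hlin _ (ha.trans (integral_id_mem_Icc hμ).1)] at hjensen
  rw [integral_map_stepMap hf ha hμ]
  linarith

end Quadrant

section Sequence

variable {f : ℝ → ℝ → ℝ} {C : ℝ}

theorem isProbabilityMeasure_mu_and_ae_mem_Icc (hf : ContinuousOn (uncurry f) (Ici 1 ×ˢ Ici 1))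
    (hmono : ∀ a b c d : ℝ, 1 ≤ a → a ≤ c → 1 ≤ b → b ≤ d → f a b ≤ f c d)
    (hlin : ∀ t : ℝ, 1 ≤ t → f t t = C * t) (hL : 1 ≤ 2 + C) (n : ℕ) :
    IsProbabilityMeasure (mu f n) ∧ ∀ᵐ x ∂mu f n, x ∈ Icc ((2 + C) ^ n) (2 * (2 + C) ^ n) := by
  induction n with
  | zero =>
    refine ⟨⟨by simp [mu, ENNReal.inv_two_add_inv_two]⟩, ?_⟩
    rw [mu, ae_add_measure_iff, Measure.ae_ennreal_smul_measure_iff (by simp),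
      Measure.ae_ennreal_smul_measure_iff (by simp)]
    exact ⟨(ae_dirac_iff measurableSet_Icc).2 (by norm_num),
      (ae_dirac_iff measurableSet_Icc).2 (by norm_num)⟩
  | succ n ih =>
    obtain ⟨hprob, hμ⟩ := ih
    have ha : 1 ≤ (2 + C) ^ n := one_le_pow₀ hL
    rw [mu_succ]
    refine ⟨Measure.isProbabilityMeasure_map (aemeasurable_stepMap hf ha hμ), ?_⟩
    simpa only [pow_succ', mul_left_comm] using ae_mem_Icc_map_stepMap hf hmono hlin ha hμ

theorem En_mem_Icc (hf : ContinuousOn (uncurry f) (Ici 1 ×ˢ Ici 1))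
    (hmono : ∀ a b c d : ℝ, 1 ≤ a → a ≤ c → 1 ≤ b → b ≤ d → f a b ≤ f c d)
    (hlin : ∀ t : ℝ, 1 ≤ t → f t t = C * t) (hL : 1 ≤ 2 + C) (n : ℕ) :
    En f n ∈ Icc ((2 + C) ^ n) (2 * (2 + C) ^ n) := by
  obtain ⟨hprob, hμ⟩ := isProbabilityMeasure_mu_and_ae_mem_Icc hf hmono hlin hL n
  exact integral_id_mem_Icc hμ

theorem mul_En_le_En_succ (hconv : ConvexOn ℝ (Ici 1 ×ˢ Ici 1) (uncurry f))
    (hf : ContinuousOn (uncurry f) (Ici 1 ×ˢ Ici 1))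
    (hmono : ∀ a b c d : ℝ, 1 ≤ a → a ≤ c → 1 ≤ b → b ≤ d → f a b ≤ f c d)
    (hlin : ∀ t : ℝ, 1 ≤ t → f t t = C * t) (hL : 1 ≤ 2 + C) (n : ℕ) :
    (2 + C) * En f n ≤ En f (n + 1) := by
  obtain ⟨hprob, hμ⟩ := isProbabilityMeasure_mu_and_ae_mem_Icc hf hmono hlin hL n
  exact two_add_mul_integral_le_of_convexOn hconv hf hlin (one_le_pow₀ hL) hμ

theorem En_succ_le_mul_En (hconc : ConcaveOn ℝ (Ici 1 ×ˢ Ici 1) (uncurry f))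
    (hf : ContinuousOn (uncurry f) (Ici 1 ×ˢ Ici 1))
    (hmono : ∀ a b c d : ℝ, 1 ≤ a → a ≤ c → 1 ≤ b → b ≤ d → f a b ≤ f c d)
    (hlin : ∀ t : ℝ, 1 ≤ t → f t t = C * t) (hL : 1 ≤ 2 + C) (n : ℕ) :
    En f (n + 1) ≤ (2 + C) * En f n := by
  obtain ⟨hprob, hμ⟩ := isProbabilityMeasure_mu_and_ae_mem_Icc hf hmono hlin hL n
  exact integral_le_two_add_mul_of_concaveOn hconc hf hlin (one_le_pow₀ hL) hμ

end Sequence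

theorem stmt2_general (f : ℝ → ℝ → ℝ) (Cx Cy : ℝ)
    -- twice differentiable on the quadrant: `f` and its first-order partial derivatives
    -- are differentiable there
    (hdiff : ∀ x y : ℝ, 1 ≤ x → 1 ≤ y →
      DifferentiableAt ℝ (fun p : ℝ × ℝ => f p.1 p.2) (x, y) ∧
      DifferentiableAt ℝ (fun p : ℝ × ℝ => pdx f p.1 p.2) (x, y) ∧
      DifferentiableAt ℝ (fun p : ℝ × ℝ => pdy f p.1 p.2) (x, y))
    -- monotone non-decreasing
    (hmono : ∀ a b c d : ℝ, 1 ≤ a → a ≤ c → 1 ≤ b → b ≤ d → f a b ≤ f c d)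
    -- condition 1
    (hC : 0 < Cx + Cy)
    (hlin : ∀ t : ℝ, 1 ≤ t → f t t = (Cx + Cy) * t) :
    -- in addition, `f` is concave or convex on the quadrant
    ∀ _ : ConvexOn ℝ (Set.Ici (1 : ℝ) ×ˢ Set.Ici (1 : ℝ)) (fun p : ℝ × ℝ => f p.1 p.2) ∨
          ConcaveOn ℝ (Set.Ici (1 : ℝ) ×ˢ Set.Ici (1 : ℝ)) (fun p : ℝ × ℝ => f p.1 p.2),
    -- conclusion: `E_n / (2 + C_x + C_y)ⁿ` converges
    ∃ L : ℝ, Tendsto (fun n : ℕ => En f n / (2 + Cx + Cy) ^ n) atTop (nhds L) := by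
  intro hcc
  have hf : ContinuousOn (uncurry f) (Ici 1 ×ˢ Ici 1) := fun p hp =>
    (hdiff p.1 p.2 hp.1 hp.2).1.continuousAt.continuousWithinAt
  have hL : 1 ≤ 2 + (Cx + Cy) := by linarith
  rw [add_assoc]
  refine exists_tendsto_div_pow_of_mem_Icc (c := 1) (d := 2) (by linarith)
    (fun n => by simpa using En_mem_Icc hf hmono hlin hL n) ?_
  exact hcc.imp (fun hconv => mul_En_le_En_succ hconv hf hmono hlin hL)
    (fun hconc => En_succ_le_mul_En hconc hf hmono hlin hL)

theorem stmt2 (f : ℝ → ℝ → ℝ) (Cx Cy A B : ℝ) (N : ℕ)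
    (hpos : ∀ x y : ℝ, 1 ≤ x → 1 ≤ y → 0 < f x y)
    -- twice differentiable on the quadrant: `f` and its first-order partial derivatives
    -- are differentiable there
    (hdiff : ∀ x y : ℝ, 1 ≤ x → 1 ≤ y →
      DifferentiableAt ℝ (fun p : ℝ × ℝ => f p.1 p.2) (x, y) ∧
      DifferentiableAt ℝ (fun p : ℝ × ℝ => pdx f p.1 p.2) (x, y) ∧
      DifferentiableAt ℝ (fun p : ℝ × ℝ => pdy f p.1 p.2) (x, y))
    -- monotone non-decreasing
    (hmono : ∀ a b c d : ℝ, 1 ≤ a → a ≤ c → 1 ≤ b → b ≤ d → f a b ≤ f c d)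
    -- condition 1
    (h1x : Tendsto (fun t : ℝ => pdx f t t) atTop (nhds Cx))
    (h1y : Tendsto (fun t : ℝ => pdy f t t) atTop (nhds Cy))
    (hC : 0 < Cx + Cy)
    (hlin : ∀ t : ℝ, 1 ≤ t → f t t = (Cx + Cy) * t)
    -- condition 2
    (hA : 0 ≤ A) (hB : 0 ≤ B) (hAB : A + B < Cx + Cy)
    (h2 : ∀ n : ℕ, N ≤ n → ∀ a1 a2 a3 a4 : ℝ,
      a1 ∈ Set.Icc ((2 + Cx + Cy) ^ n) (2 * (2 + Cx + Cy) ^ n) →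
      a2 ∈ Set.Icc ((2 + Cx + Cy) ^ n) (2 * (2 + Cx + Cy) ^ n) →
      a3 ∈ Set.Icc ((2 + Cx + Cy) ^ n) (2 * (2 + Cx + Cy) ^ n) →
      a4 ∈ Set.Icc ((2 + Cx + Cy) ^ n) (2 * (2 + Cx + Cy) ^ n) →
      (f a1 a2 - f a3 a4) ^ 2 ≤ A * (a1 - a3) ^ 2 + B * (a2 - a4) ^ 2)
    -- condition 3
    (h3 : ∀ g ∈ ({pdxx f, pdyy f, pdxy f} : Set (ℝ → ℝ → ℝ)),
      Tendsto (fun n : ℕ => (2 + Cx + Cy) ^ (2 * n) *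
        sSup ((fun p : ℝ × ℝ => (g p.1 p.2) ^ 2) ''
          (Set.Icc ((2 + Cx + Cy) ^ n) (2 * (2 + Cx + Cy) ^ n) ×ˢ
           Set.Icc ((2 + Cx + Cy) ^ n) (2 * (2 + Cx + Cy) ^ n))) / 2 ^ n)
        atTop (nhds 0)) :
    -- in addition, `f` is concave or convex on the quadrant
    ∀ _ : ConvexOn ℝ (Set.Ici (1 : ℝ) ×ˢ Set.Ici (1 : ℝ)) (fun p : ℝ × ℝ => f p.1 p.2) ∨
          ConcaveOn ℝ (Set.Ici (1 : ℝ) ×ˢ Set.Ici (1 : ℝ)) (fun p : ℝ × ℝ => f p.1 p.2),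
    -- conclusion: `E_n / (2 + C_x + C_y)ⁿ` converges
    ∃ L : ℝ, Tendsto (fun n : ℕ => En f n / (2 + Cx + Cy) ^ n) atTop (nhds L) :=
  stmt2_general f Cx Cy hdiff hmono hC hlin
end

section
/- Let f : ℝ → ℝ → ℝ be monotone non-decreasing on [1,∞)×[1,∞) (f(a,b) ≤ f(c,d) whenever 1 ≤ a ≤ c and 1 ≤ b ≤ d) and satisfy f(t,t) = C·t for all t ≥ 1, where C > 0. Then for every n, the measure μ_n is supported on the interval [(2+C)ⁿ, 2(2+C)ⁿ]; i.e., μ_n gives full measure to [(2+C)ⁿ, 2(2+C)ⁿ]. -/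
/-!
By induction, `μ_n` is a probability measure carried by a countable subset of
`[L, 2L]`, `L = (2 + C)ⁿ`. For `a, b, c, d ∈ [L, 2L]` monotonicity gives
`C L = f(L, L) ≤ f(c, d) ≤ f(2L, 2L) = 2 C L`, so `a + b + f(c, d) ∈ [(2 + C) L, 2 (2 + C) L]`.
Since `f` need not be measurable, the pushforward is only meaningful because the product measure
lives on a countable set, where every map is a.e.-measurable.
-/

open MeasureTheory Filter

open Set

namespace MeasureTheory.Measure

variable {α β : Type*} [MeasurableSpace α] [MeasurableSpace β]

def CountablyConcentratedOn (μ : Measure α) (s : Set α) : Prop :=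
  ∃ S ⊆ s, S.Countable ∧ ∀ᵐ x ∂μ, x ∈ S

namespace CountablyConcentratedOn

variable {μ : Measure α} {s t : Set α}

theorem ae_mem (h : μ.CountablyConcentratedOn s) : ∀ᵐ x ∂μ, x ∈ s :=
  let ⟨_, hSs, _, hS⟩ := h
  hS.mono fun _ hx => hSs hx

theorem mono (h : μ.CountablyConcentratedOn s) (hst : s ⊆ t) : μ.CountablyConcentratedOn t :=
  let ⟨S, hSs, hSc, hS⟩ := h
  ⟨S, hSs.trans hst, hSc, hS⟩

theorem aemeasurable [MeasurableSingletonClass α] (h : μ.CountablyConcentratedOn s) (g : α → β) :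
    AEMeasurable g μ := by
  obtain ⟨S, -, hSc, hS⟩ := h
  have : Countable S := hSc.to_subtype
  rw [← restrict_eq_self_of_ae_mem hS, ← biUnion_of_singleton S, biUnion_eq_iUnion,
    aemeasurable_iUnion_iff]
  intro x
  rw [restrict_singleton]
  exact aemeasurable_dirac.smul_measure _

theorem map [MeasurableSingletonClass α] [MeasurableSingletonClass β]
    (h : μ.CountablyConcentratedOn s) (g : α → β) : (μ.map g).CountablyConcentratedOn (g '' s) := by
  have hg := h.aemeasurable g
  obtain ⟨S, hSs, hSc, hS⟩ := h
  refine ⟨g '' S, image_mono hSs, hSc.image g, ?_⟩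
  exact (mem_ae_map_iff hg (hSc.image g).measurableSet).2
    (mem_of_superset hS (subset_preimage_image g S))

theorem prod {ν : Measure β} [SFinite ν] {t : Set β} (hμ : μ.CountablyConcentratedOn s)
    (hν : ν.CountablyConcentratedOn t) : (μ.prod ν).CountablyConcentratedOn (s ×ˢ t) := by
  obtain ⟨S, hSs, hSc, hS⟩ := hμ
  obtain ⟨T, hTt, hTc, hT⟩ := hν
  exact ⟨S ×ˢ T, Set.prod_mono hSs hTt, hSc.prod hTc,
    (quasiMeasurePreserving_fst.ae hS).and (quasiMeasurePreserving_snd.ae hT)⟩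

end CountablyConcentratedOn

end MeasureTheory.Measure

section Recursion

variable {f : ℝ → ℝ → ℝ} {C : ℝ}

theorem apply_mem_Icc_of_mem_Icc
    (hmono : ∀ a b c d : ℝ, 1 ≤ a → a ≤ c → 1 ≤ b → b ≤ d → f a b ≤ f c d)
    (hlin : ∀ t : ℝ, 1 ≤ t → f t t = C * t) {L c d : ℝ} (hL : 1 ≤ L)
    (hc : c ∈ Icc L (2 * L)) (hd : d ∈ Icc L (2 * L)) : f c d ∈ Icc (C * L) (C * (2 * L)) := by
  constructor
  · rw [← hlin L hL]
    exact hmono L L c d hL hc.1 hL hd.1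
  · rw [← hlin (2 * L) (by linarith)]
    exact hmono c d (2 * L) (2 * L) (hL.trans hc.1) hc.2 (hL.trans hd.1) hd.2

theorem isProbabilityMeasure_mu_zero : IsProbabilityMeasure (mu f 0) := by
  constructor
  simp [mu, ENNReal.inv_two_add_inv_two]

theorem countablyConcentratedOn_mu_zero : (mu f 0).CountablyConcentratedOn (Icc 1 2) := by
  refine ⟨{1, 2}, ?_, (countable_singleton 2).insert 1, ?_⟩
  · rintro x (rfl | rfl) <;> norm_num
  · simp [mu, ae_add_measure_iff]

theorem isProbabilityMeasure_and_countablyConcentratedOn_mu (hC : 0 < C)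
    (hmono : ∀ a b c d : ℝ, 1 ≤ a → a ≤ c → 1 ≤ b → b ≤ d → f a b ≤ f c d)
    (hlin : ∀ t : ℝ, 1 ≤ t → f t t = C * t) (n : ℕ) :
    IsProbabilityMeasure (mu f n) ∧
      (mu f n).CountablyConcentratedOn (Icc ((2 + C) ^ n) (2 * (2 + C) ^ n)) := by
  induction n with
  | zero => simpa using ⟨isProbabilityMeasure_mu_zero, countablyConcentratedOn_mu_zero⟩
  | succ n ih =>
    obtain ⟨hprob, hconc⟩ := ih
    have hprod := hconc.prod (hconc.prod (hconc.prod hconc))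
    refine ⟨Measure.isProbabilityMeasure_map (hprod.aemeasurable _), (hprod.map _).mono ?_⟩
    rintro _ ⟨⟨a, b, c, d⟩, ⟨ha, hb, hc, hd⟩, rfl⟩
    have hfcd := apply_mem_Icc_of_mem_Icc hmono hlin (one_le_pow₀ (by linarith)) hc hd
    rw [pow_succ]
    constructor <;> linarith [ha.1, ha.2, hb.1, hb.2, hfcd.1, hfcd.2]

end Recursion

theorem stmt6 (f : ℝ → ℝ → ℝ) (C : ℝ) (hC : 0 < C)
    (hmono : ∀ a b c d : ℝ, 1 ≤ a → a ≤ c → 1 ≤ b → b ≤ d → f a b ≤ f c d)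
    (hlin : ∀ t : ℝ, 1 ≤ t → f t t = C * t) :
    ∀ n : ℕ, mu f n (Set.Icc ((2 + C) ^ n) (2 * (2 + C) ^ n)) = 1 := by
  intro n
  obtain ⟨hprob, hconc⟩ := isProbabilityMeasure_and_countablyConcentratedOn_mu hC hmono hlin n
  exact (mem_ae_iff_prob_eq_one measurableSet_Icc).1 hconc.ae_mem
end

section
/- Let f : ℝ → ℝ → ℝ be a measurable function such that each μ_n has finite second moment (e.g. because each μ_n is compactly supported). Then for every n, writing a₁, a₂, a₃, a₄ for independent random variables each with law μ_n, the variance satisfies V_{n+1} = 2·V_n + (1/2)·E[(f(a₁,a₂) − f(a₃,a₄))²]. In particular V_{n+1} ≥ 2·V_n for all n, and hence V_n ≥ 2ⁿ·V₀ with V₀ = 1/4. -/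
/-!
If `a, b, c, d` are independent with law `μ_n`, then `a`, `b` and `f c d` are independent, so the
variance of `a + b + f c d` is `2 V_n + Var (f c d)`. For an independent copy `W'` of `W = f c d`,
`E[(W - W')²] = 2 Var W`, which gives the recursion; the correction term is nonnegative, hence
`V_{n+1} ≥ 2 V_n`, and `V_0 = 1/4` since `μ_0` is uniform on `{1, 2}`.
-/

open MeasureTheory Filter

open ProbabilityTheory

section ProductVariance

variable {α β : Type*} [MeasurableSpace α] [MeasurableSpace β] {μ : Measure α} {ν : Measure β}
  [IsProbabilityMeasure μ] [IsProbabilityMeasure ν]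

lemma MeasureTheory.MemLp.of_fun_add_prod {E : Type*} [NormedAddCommGroup E] {p : ENNReal}
    {X : α → E} {Y : β → E} (hX : MemLp X p μ) (hY : AEStronglyMeasurable Y ν)
    (hXY : MemLp (fun q : α × β => X q.1 + Y q.2) p (μ.prod ν)) :
    MemLp Y p ν := by
  have hYsnd : MemLp (Y ∘ Prod.snd) p (μ.prod ν) := by
    convert hXY.sub (hX.comp_fst ν) using 1
    ext q
    simp
  refine ⟨hY, ?_⟩
  rw [← eLpNorm_comp_measurePreserving hY (measurePreserving_snd (μ := μ) (ν := ν))]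
  exact hYsnd.2

lemma integral_sub_sq_prod_self {X : α → ℝ} (hX : MemLp X 2 μ) :
    ∫ p : α × α, (X p.1 - X p.2) ^ 2 ∂(μ.prod μ) = 2 * Var[X; μ] := by
  have hint := hX.integrable one_le_two
  have hmean : ∫ p : α × α, (X p.1 - X p.2) ∂(μ.prod μ) = 0 := by
    rw [integral_sub (hint.comp_fst μ) (hint.comp_snd μ), integral_fun_fst, integral_fun_snd]
    simp
  have hvar := variance_add_prod hX hX.neg
  rw [variance_neg, variance_eq_integral (by fun_prop)] at hvar
  simp only [Pi.neg_apply, ← sub_eq_add_neg, hmean, sub_zero] at hvar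
  rw [hvar, two_mul]

end ProductVariance

lemma variance_id_map_add_add_prod {μ : Measure ℝ} [IsProbabilityMeasure μ] {f : ℝ → ℝ → ℝ}
    (hf : Measurable (fun p : ℝ × ℝ => f p.1 p.2)) (hμ : MemLp id 2 μ)
    (hμ' : MemLp id 2 (Measure.map (fun p : ℝ × ℝ × ℝ × ℝ => p.1 + p.2.1 + f p.2.2.1 p.2.2.2)
      (μ.prod (μ.prod (μ.prod μ))))) :
    Var[id; Measure.map (fun p : ℝ × ℝ × ℝ × ℝ => p.1 + p.2.1 + f p.2.2.1 p.2.2.2)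
        (μ.prod (μ.prod (μ.prod μ)))] =
      2 * Var[id; μ] + (1 / 2) * ∫ p : ℝ × ℝ × ℝ × ℝ, (f p.1 p.2.1 - f p.2.2.1 p.2.2.2) ^ 2
        ∂(μ.prod (μ.prod (μ.prod μ))) := by
  set W : ℝ × ℝ → ℝ := fun q => f q.1 q.2
  set H : ℝ × ℝ × ℝ → ℝ := fun q => id q.1 + W q.2
  have hG : (fun p : ℝ × ℝ × ℝ × ℝ => p.1 + p.2.1 + f p.2.2.1 p.2.2.2) =
      fun p => id p.1 + H p.2 := funext fun p => add_assoc _ _ _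
  have hGm : Measurable fun p : ℝ × ℝ × ℝ × ℝ => p.1 + p.2.1 + f p.2.2.1 p.2.2.2 := by
    rw [hG]
    fun_prop
  have hG2 := hμ'.comp_of_map hGm.aemeasurable
  rw [hG] at hG2
  have hH2 : MemLp H 2 (μ.prod (μ.prod μ)) := hμ.of_fun_add_prod (by fun_prop) hG2
  have hW2 : MemLp W 2 (μ.prod μ) := hμ.of_fun_add_prod hf.aestronglyMeasurable hH2
  have hreassoc :
      ∫ p : ℝ × ℝ × ℝ × ℝ, (f p.1 p.2.1 - f p.2.2.1 p.2.2.2) ^ 2 ∂(μ.prod (μ.prod (μ.prod μ))) =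
        ∫ q : (ℝ × ℝ) × (ℝ × ℝ), (W q.1 - W q.2) ^ 2 ∂((μ.prod μ).prod (μ.prod μ)) :=
    ((measurePreserving_prodAssoc μ μ (μ.prod μ)).integral_comp' _).symm
  rw [variance_id_map hGm.aemeasurable, hG, variance_add_prod hμ hH2, variance_add_prod hμ hW2,
    hreassoc, integral_sub_sq_prod_self hW2]
  ring

section Recursion

variable {f : ℝ → ℝ → ℝ}

lemma isProbabilityMeasure_mu (hf : Measurable (fun p : ℝ × ℝ => f p.1 p.2)) :
    ∀ n, IsProbabilityMeasure (mu f n)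
  | 0 => ⟨by simp [mu, ENNReal.inv_two_add_inv_two]⟩
  | n + 1 => by
    have := isProbabilityMeasure_mu hf n
    exact Measure.isProbabilityMeasure_map (by fun_prop)

lemma integral_mu_zero (g : ℝ → ℝ) : ∫ x, g x ∂(mu f 0) = (g 1 + g 2) / 2 := by
  rw [mu, integral_add_measure ((integrable_dirac (by simp)).smul_measure (by simp))
      ((integrable_dirac (by simp)).smul_measure (by simp)),
    integral_smul_measure, integral_smul_measure, integral_dirac, integral_dirac]
  simp only [ENNReal.toReal_inv, ENNReal.toReal_ofNat, smul_eq_mul]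
  ring

lemma Vn_zero : Vn f 0 = 1 / 4 := by
  rw [Vn, En, integral_mu_zero, integral_mu_zero]
  norm_num

lemma Vn_eq_variance (n : ℕ) : Vn f n = Var[id; mu f n] :=
  (variance_eq_integral measurable_id.aemeasurable).symm

theorem Vn_succ (hf : Measurable (fun p : ℝ × ℝ => f p.1 p.2))
    (hmom : ∀ n : ℕ, Integrable (fun x : ℝ => x ^ 2) (mu f n)) (n : ℕ) :
    Vn f (n + 1) = 2 * Vn f n +
        (1 / 2) * ∫ p : ℝ × ℝ × ℝ × ℝ, (f p.1 p.2.1 - f p.2.2.1 p.2.2.2) ^ 2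
          ∂((mu f n).prod ((mu f n).prod ((mu f n).prod (mu f n)))) := by
  have := isProbabilityMeasure_mu hf n
  have hL2 (k : ℕ) : MemLp id 2 (mu f k) :=
    (memLp_two_iff_integrable_sq aestronglyMeasurable_id).2 (hmom k)
  rw [Vn_eq_variance, Vn_eq_variance, mu]
  exact variance_id_map_add_add_prod hf (hL2 n) (hL2 (n + 1))

end Recursion

theorem stmt7 (f : ℝ → ℝ → ℝ)
    (hf : Measurable (fun p : ℝ × ℝ => f p.1 p.2))
    (hmom : ∀ n : ℕ, Integrable (fun x : ℝ => x ^ 2) (mu f n)) :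
    (∀ n : ℕ, Vn f (n + 1) = 2 * Vn f n +
        (1 / 2) * ∫ p : ℝ × ℝ × ℝ × ℝ, (f p.1 p.2.1 - f p.2.2.1 p.2.2.2) ^ 2
          ∂((mu f n).prod ((mu f n).prod ((mu f n).prod (mu f n))))) ∧
    (∀ n : ℕ, 2 * Vn f n ≤ Vn f (n + 1)) ∧
    Vn f 0 = 1 / 4 ∧
    (∀ n : ℕ, 2 ^ n * Vn f 0 ≤ Vn f n) := by
  have hdouble (n : ℕ) : 2 * Vn f n ≤ Vn f (n + 1) := by
    rw [Vn_succ hf hmom n, le_add_iff_nonneg_right]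
    exact mul_nonneg (by norm_num) (integral_nonneg fun _ => sq_nonneg _)
  refine ⟨Vn_succ hf hmom, hdouble, Vn_zero, fun n => ?_⟩
  induction n with
  | zero => simp
  | succ k ih =>
    calc (2 : ℝ) ^ (k + 1) * Vn f 0 = 2 * (2 ^ k * Vn f 0) := by ring
      _ ≤ 2 * Vn f k := by gcongr
      _ ≤ Vn f (k + 1) := hdouble k
end

section
/- Let f₁(t,s) = t·s/(t+s). For all positive real numbers a₁, a₂, a₃, a₄ satisfying 1/2 ≤ aᵢ/aⱼ ≤ 2 for all i, j ∈ {1,2,3,4}, one has (f₁(a₁,a₂) − f₁(a₃,a₄))² ≤ (20/81)·((a₁−a₃)² + (a₂−a₄)²). -/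
/-- The parallel-resistance function `f₁(t,s) = ts/(t+s)`. -/
noncomputable def f1 (t s : ℝ) : ℝ := t * s / (t + s)

lemma key10 (p u q X Y : ℝ) (hp1 : 1/3 ≤ p) (hp2 : p ≤ 2/3)
    (hu1 : 1/3 ≤ u) (hu2 : u ≤ 2/3) (hq1 : 1/3 ≤ q) (hq2 : q ≤ 2/3) :
    (p*u*X + (1-u)*q*Y)^2 ≤ 20/81 * (X^2 + Y^2) := by
  set c1 := p*u with hc1def
  set c2 := (1-u)*q with hc2def
  have h1 : (c1*X + c2*Y)^2 ≤ (c1^2 + c2^2) * (X^2 + Y^2) := by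
    nlinarith [sq_nonneg (c1*Y - c2*X)]
  have hp : p^2 ≤ 4/9 := by nlinarith
  have hq : q^2 ≤ 4/9 := by nlinarith
  have hc1 : c1^2 ≤ 4/9 * u^2 := by
    have h := mul_le_mul_of_nonneg_right hp (sq_nonneg u)
    calc c1^2 = p^2 * u^2 := by rw [hc1def]; ring
      _ ≤ 4/9 * u^2 := h
  have hc2 : c2^2 ≤ 4/9 * (1-u)^2 := by
    have h := mul_le_mul_of_nonneg_right hq (sq_nonneg (1-u))
    calc c2^2 = q^2 * (1-u)^2 := by rw [hc2def]; ring
      _ ≤ 4/9 * (1-u)^2 := h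
  have hu : u^2 + (1-u)^2 ≤ 5/9 := by nlinarith
  have hsum : c1^2 + c2^2 ≤ 20/81 := by nlinarith
  have hXY : 0 ≤ X^2 + Y^2 := by positivity
  calc (c1*X + c2*Y)^2 ≤ (c1^2 + c2^2) * (X^2 + Y^2) := h1
    _ ≤ 20/81 * (X^2 + Y^2) := by nlinarith

theorem stmt10 (a : Fin 4 → ℝ) (hpos : ∀ i, 0 < a i)
    (hratio : ∀ i j, 1 / 2 ≤ a i / a j ∧ a i / a j ≤ 2) :
    (f1 (a 0) (a 1) - f1 (a 2) (a 3)) ^ 2 ≤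
      (20 / 81) * ((a 0 - a 2) ^ 2 + (a 1 - a 3) ^ 2) := by
  have h0 := hpos 0
  have h1 := hpos 1
  have h2 := hpos 2
  have h3 := hpos 3
  have hle : ∀ i j : Fin 4, a i ≤ 2 * a j := by
    intro i j
    have h := (hratio i j).2
    have hj := hpos j
    rw [div_le_iff₀ hj] at h
    linarith
  have d1 : (0:ℝ) < a 0 + a 1 := by linarith
  have d2 : (0:ℝ) < a 2 + a 1 := by linarith
  have d3 : (0:ℝ) < a 2 + a 3 := by linarith
  set p := a 1 / (a 0 + a 1) with hp
  set u := a 1 / (a 2 + a 1) with hu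
  set q := a 2 / (a 2 + a 3) with hq
  have hid : f1 (a 0) (a 1) - f1 (a 2) (a 3)
      = p*u*(a 0 - a 2) + (1-u)*q*(a 1 - a 3) := by
    simp only [f1, hp, hu, hq]
    field_simp
    ring
  have hp1 : 1/3 ≤ p := by
    rw [hp, le_div_iff₀ d1]; have := hle 0 1; linarith
  have hp2 : p ≤ 2/3 := by
    rw [hp, div_le_iff₀ d1]; have := hle 1 0; linarith
  have hu1 : 1/3 ≤ u := by
    rw [hu, le_div_iff₀ d2]; have := hle 2 1; linarith
  have hu2 : u ≤ 2/3 := by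
    rw [hu, div_le_iff₀ d2]; have := hle 1 2; linarith
  have hq1 : 1/3 ≤ q := by
    rw [hq, le_div_iff₀ d3]; have := hle 3 2; linarith
  have hq2 : q ≤ 2/3 := by
    rw [hq, div_le_iff₀ d3]; have := hle 2 3; linarith
  rw [hid]
  exact key10 p u q (a 0 - a 2) (a 1 - a 3) hp1 hp2 hu1 hu2 hq1 hq2
end

section
/- Let f₁(t,s) = t·s/(t+s). For all positive real numbers a₁, a₂, a₃, a₄ satisfying 1/2 ≤ aᵢ/aⱼ ≤ 2 for all i, j ∈ {1,2,3,4}, one has (f₁(a₁,a₂) − f₁(a₃,a₄))² ≤ (17/81)·((a₁−a₃)² + (a₂−a₄)²). -/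
private lemma key_quartic (t s x y : ℝ) (ht : 0 < t) (hs : 0 < s)
    (h1 : t ≤ 2*s) (h2 : s ≤ 2*t) :
    (s^2*x + t^2*y)^2 ≤ 17/81 * (x^2+y^2) * (t+s)^4 := by
  nlinarith [sq_nonneg (s^2*y - t^2*x),
    mul_nonneg (add_nonneg (sq_nonneg x) (sq_nonneg y))
      (mul_nonneg (mul_nonneg (sub_nonneg.2 h1) (sub_nonneg.2 h2))
        (by nlinarith [sq_nonneg t, sq_nonneg s, mul_pos ht hs] : (0:ℝ) ≤ 32*t^2+46*t*s+32*s^2))]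

theorem stmt11 (a : Fin 4 → ℝ) (hpos : ∀ i, 0 < a i)
    (hratio : ∀ i j, 1 / 2 ≤ a i / a j ∧ a i / a j ≤ 2) :
    (f1 (a 0) (a 1) - f1 (a 2) (a 3)) ^ 2 ≤
      (17 / 81) * ((a 0 - a 2) ^ 2 + (a 1 - a 3) ^ 2) := by
  have h0 := hpos 0
  have h1 := hpos 1
  have h2 := hpos 2
  have h3 := hpos 3
  -- ratio facts
  have r01 : a 0 ≤ 2 * a 1 := by
    have := (hratio 0 1).2; rw [div_le_iff₀ h1] at this; linarith
  have r10 : a 1 ≤ 2 * a 0 := by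
    have := (hratio 1 0).2; rw [div_le_iff₀ h0] at this; linarith
  have r23 : a 2 ≤ 2 * a 3 := by
    have := (hratio 2 3).2; rw [div_le_iff₀ h3] at this; linarith
  have r32 : a 3 ≤ 2 * a 2 := by
    have := (hratio 3 2).2; rw [div_le_iff₀ h2] at this; linarith
  set x : ℝ := a 0 - a 2 with hx
  set y : ℝ := a 1 - a 3 with hy
  set g : ℝ → ℝ := fun θ => (a 2 + θ * x) * (a 3 + θ * y) / ((a 2 + θ * x) + (a 3 + θ * y))
    with hg
  set G : ℝ → ℝ := fun θ =>
    ((x * (a 3 + θ * y) + (a 2 + θ * x) * y) * ((a 2 + θ * x) + (a 3 + θ * y))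
      - (a 2 + θ * x) * (a 3 + θ * y) * (x + y)) / ((a 2 + θ * x) + (a 3 + θ * y)) ^ 2
    with hG
  -- positivity along the segment
  have hT : ∀ θ ∈ Set.Icc (0:ℝ) 1, 0 < a 2 + θ * x := by
    intro θ hθ
    have : a 2 + θ * x = (1 - θ) * a 2 + θ * a 0 := by rw [hx]; ring
    rw [this]
    rcases eq_or_lt_of_le hθ.1 with h | h
    · simp [← h]; linarith
    · have := hθ.2
      have h2' : 0 ≤ (1 - θ) * a 2 := mul_nonneg (by linarith) h2.le
      nlinarith
  have hS : ∀ θ ∈ Set.Icc (0:ℝ) 1, 0 < a 3 + θ * y := by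
    intro θ hθ
    have : a 3 + θ * y = (1 - θ) * a 3 + θ * a 1 := by rw [hy]; ring
    rw [this]
    rcases eq_or_lt_of_le hθ.1 with h | h
    · simp [← h]; linarith
    · have := hθ.2
      have h3' : 0 ≤ (1 - θ) * a 3 := mul_nonneg (by linarith) h3.le
      nlinarith
  -- derivative
  have hder : ∀ θ ∈ Set.Icc (0:ℝ) 1, HasDerivAt g (G θ) θ := by
    intro θ hθ
    have hM : (a 2 + θ * x) + (a 3 + θ * y) ≠ 0 := by
      have := hT θ hθ; have := hS θ hθ; positivity
    have hN : HasDerivAt (fun θ : ℝ => (a 2 + θ * x) * (a 3 + θ * y))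
        (x * (a 3 + θ * y) + (a 2 + θ * x) * y) θ := by
      have hu : HasDerivAt (fun θ : ℝ => a 2 + θ * x) x θ := by
        simpa using ((hasDerivAt_id θ).mul_const x).const_add (a 2)
      have hv : HasDerivAt (fun θ : ℝ => a 3 + θ * y) y θ := by
        simpa using ((hasDerivAt_id θ).mul_const y).const_add (a 3)
      exact hu.mul hv
    have hMd : HasDerivAt (fun θ : ℝ => (a 2 + θ * x) + (a 3 + θ * y)) (x + y) θ := by
      have hu : HasDerivAt (fun θ : ℝ => a 2 + θ * x) x θ := by
        simpa using ((hasDerivAt_id θ).mul_const x).const_add (a 2)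
      have hv : HasDerivAt (fun θ : ℝ => a 3 + θ * y) y θ := by
        simpa using ((hasDerivAt_id θ).mul_const y).const_add (a 3)
      exact hu.add hv
    exact hN.div hMd hM
  -- MVT
  obtain ⟨θ, hθ, hslope⟩ := exists_hasDerivAt_eq_slope g G (by norm_num : (0:ℝ) < 1)
    (fun θ hθ => (hder θ hθ).continuousAt.continuousWithinAt)
    (fun θ hθ => hder θ (Set.mem_of_mem_of_subset hθ Set.Ioo_subset_Icc_self))
  have hθ' : θ ∈ Set.Icc (0:ℝ) 1 := Set.mem_of_mem_of_subset hθ Set.Ioo_subset_Icc_self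
  -- endpoints
  have hg1 : g 1 = f1 (a 0) (a 1) := by
    simp only [hg, f1, hx, hy]; norm_num
  have hg0 : g 0 = f1 (a 2) (a 3) := by
    simp only [hg, f1]; norm_num
  have hD : f1 (a 0) (a 1) - f1 (a 2) (a 3) = G θ := by
    rw [← hg1, ← hg0, hslope]; norm_num
  rw [hD]
  -- bound G θ
  set T : ℝ := a 2 + θ * x with hTd
  set S : ℝ := a 3 + θ * y with hSd
  have hT0 : 0 < T := hT θ hθ'
  have hS0 : 0 < S := hS θ hθ'
  have hTS1 : T ≤ 2 * S := by
    have e1 : T = (1 - θ) * a 2 + θ * a 0 := by rw [hTd, hx]; ring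
    have e2 : S = (1 - θ) * a 3 + θ * a 1 := by rw [hSd, hy]; ring
    rw [e1, e2]
    have h1' : (1 - θ) * a 2 ≤ (1 - θ) * (2 * a 3) :=
      mul_le_mul_of_nonneg_left r23 (by linarith [hθ'.2])
    have h2' : θ * a 0 ≤ θ * (2 * a 1) := mul_le_mul_of_nonneg_left r01 hθ'.1
    linarith
  have hST1 : S ≤ 2 * T := by
    have e1 : T = (1 - θ) * a 2 + θ * a 0 := by rw [hTd, hx]; ring
    have e2 : S = (1 - θ) * a 3 + θ * a 1 := by rw [hSd, hy]; ring
    rw [e1, e2]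
    have h1' : (1 - θ) * a 3 ≤ (1 - θ) * (2 * a 2) :=
      mul_le_mul_of_nonneg_left r32 (by linarith [hθ'.2])
    have h2' : θ * a 1 ≤ θ * (2 * a 0) := mul_le_mul_of_nonneg_left r10 hθ'.1
    linarith
  have hGval : G θ = (S ^ 2 * x + T ^ 2 * y) / (T + S) ^ 2 := by
    rw [hG]
    have hM : T + S ≠ 0 := by positivity
    rw [hTd, hSd] at hM ⊢
    field_simp
    ring
  rw [hGval, div_pow]
  rw [div_le_iff₀ (by positivity : (0:ℝ) < ((T + S) ^ 2) ^ 2)]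
  have key : (S ^ 2 * x + T ^ 2 * y) ^ 2 ≤ 17 / 81 * (x ^ 2 + y ^ 2) * (T + S) ^ 4 := by
    have := key_quartic T S x y hT0 hS0 hTS1 hST1
    linarith [this]
  calc (S ^ 2 * x + T ^ 2 * y) ^ 2 ≤ 17 / 81 * (x ^ 2 + y ^ 2) * (T + S) ^ 4 := key
    _ = 17 / 81 * (x ^ 2 + y ^ 2) * ((T + S) ^ 2) ^ 2 := by ring
end

section
/- Let f₂(t,s) = √t·√s (the geometric mean). For all positive real numbers a₁, a₂, a₃, a₄ satisfying 1/2 ≤ aᵢ/aⱼ ≤ 2 for all i, j ∈ {1,2,3,4}, one has (f₂(a₁,a₂) − f₂(a₃,a₄))² ≤ (5/8)·(a₁−a₃)² + (5/8)·(a₂−a₄)². -/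
set_option maxHeartbeats 1000000

lemma key19 (x y z w : ℝ) (hx : 0 < x) (hy : 0 < y) (hz : 0 < z) (hw : 0 < w)
    (h1 : y ^ 2 ≤ 2 * x ^ 2) (h2 : x ^ 2 ≤ 2 * y ^ 2)
    (h3 : w ^ 2 ≤ 2 * z ^ 2) (h4 : z ^ 2 ≤ 2 * w ^ 2) :
    (x * y - z * w) ^ 2 ≤ 5 / 8 * (x ^ 2 - z ^ 2) ^ 2 + 5 / 8 * (y ^ 2 - w ^ 2) ^ 2 := by
  have hyw : y * w ≤ 2 * x * z := by
    nlinarith [mul_pos hy hw, mul_pos hx hz, sq_nonneg w, sq_nonneg x,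
      mul_le_mul h1 h3 (sq_nonneg w) (by positivity : (0:ℝ) ≤ 2 * x ^ 2)]
  have hxz : x * z ≤ 2 * y * w := by
    nlinarith [mul_pos hy hw, mul_pos hx hz, sq_nonneg z, sq_nonneg y,
      mul_le_mul h2 h4 (sq_nonneg z) (by positivity : (0:ℝ) ≤ 2 * y ^ 2)]
  set S := (x + z) ^ 2 with hSdef
  set T := (y + w) ^ 2 with hTdef
  have hSpos : 0 < S := by positivity
  have hTpos : 0 < T := by positivity
  have hT : T ≤ 2 * S := by simp only [hSdef, hTdef]; nlinarith
  have hS : S ≤ 2 * T := by simp only [hSdef, hTdef]; nlinarith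
  have hST : 2 * (S ^ 2 + T ^ 2) ≤ 5 * (S * T) := by
    nlinarith [mul_nonneg (sub_nonneg.2 hT) (sub_nonneg.2 hS)]
  set u := x ^ 2 - z ^ 2 with hu
  set v := y ^ 2 - w ^ 2 with hv
  have hid : 2 * (x + z) * (y + w) * (x * y - z * w) = T * u + S * v := by
    simp only [hSdef, hTdef, hu, hv]; ring
  have hcauchy : (T * u + S * v) ^ 2 ≤ (T ^ 2 + S ^ 2) * (u ^ 2 + v ^ 2) := by
    nlinarith [sq_nonneg (T * v - S * u)]
  have hsq : 4 * (S * T) * (x * y - z * w) ^ 2 = (T * u + S * v) ^ 2 := by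
    rw [← hid]; simp only [hSdef, hTdef]; ring
  have hfin : 4 * (S * T) * (x * y - z * w) ^ 2 ≤ (5 / 2) * (S * T) * (u ^ 2 + v ^ 2) := by
    rw [hsq]
    calc (T * u + S * v) ^ 2 ≤ (T ^ 2 + S ^ 2) * (u ^ 2 + v ^ 2) := hcauchy
      _ ≤ (5 / 2) * (S * T) * (u ^ 2 + v ^ 2) := by
          apply mul_le_mul_of_nonneg_right _ (by positivity)
          linarith
  have hfin2 : 4 * (S * T) * (x * y - z * w) ^ 2 ≤
      4 * (S * T) * (5 / 8 * (u ^ 2 + v ^ 2)) := by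
    have : (5 / 2) * (S * T) * (u ^ 2 + v ^ 2) = 4 * (S * T) * (5 / 8 * (u ^ 2 + v ^ 2)) := by
      ring
    linarith [hfin]
  have := le_of_mul_le_mul_left hfin2 (by positivity : (0:ℝ) < 4 * (S * T))
  simp only [hu, hv] at this
  linarith

/-- The geometric-mean function `f₂(t,s) = √t·√s`. -/
noncomputable def f2 (t s : ℝ) : ℝ := Real.sqrt t * Real.sqrt s

theorem stmt19 (a : Fin 4 → ℝ) (hpos : ∀ i, 0 < a i)
    (hratio : ∀ i j, 1 / 2 ≤ a i / a j ∧ a i / a j ≤ 2) :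
    (f2 (a 0) (a 1) - f2 (a 2) (a 3)) ^ 2 ≤
      (5 / 8) * (a 0 - a 2) ^ 2 + (5 / 8) * (a 1 - a 3) ^ 2 := by
  have h0 := hpos 0; have h1 := hpos 1; have h2 := hpos 2; have h3 := hpos 3
  have r10 : a 1 ≤ 2 * a 0 := by
    have := (hratio 1 0).2; rw [div_le_iff₀ h0] at this; linarith
  have r01 : a 0 ≤ 2 * a 1 := by
    have := (hratio 0 1).2; rw [div_le_iff₀ h1] at this; linarith
  have r32 : a 3 ≤ 2 * a 2 := by
    have := (hratio 3 2).2; rw [div_le_iff₀ h2] at this; linarith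
  have r23 : a 2 ≤ 2 * a 3 := by
    have := (hratio 2 3).2; rw [div_le_iff₀ h3] at this; linarith
  have s0 : Real.sqrt (a 0) ^ 2 = a 0 := Real.sq_sqrt h0.le
  have s1 : Real.sqrt (a 1) ^ 2 = a 1 := Real.sq_sqrt h1.le
  have s2 : Real.sqrt (a 2) ^ 2 = a 2 := Real.sq_sqrt h2.le
  have s3 : Real.sqrt (a 3) ^ 2 = a 3 := Real.sq_sqrt h3.le
  have key := key19 (Real.sqrt (a 0)) (Real.sqrt (a 1)) (Real.sqrt (a 2)) (Real.sqrt (a 3))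
    (Real.sqrt_pos.2 h0) (Real.sqrt_pos.2 h1) (Real.sqrt_pos.2 h2) (Real.sqrt_pos.2 h3)
    (by rw [s0, s1]; linarith) (by rw [s0, s1]; linarith)
    (by rw [s2, s3]; linarith) (by rw [s2, s3]; linarith)
  rw [s0, s1, s2, s3] at key
  simpa [f2] using key
end
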